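/- Let R be a commutative ring, I = (t_1,...,t_n) an ideal generated by a quasi-regular sequence such that R and R/I are projective k-modules and the Koszul complex K of t_1,...,t_n over R is exact in nonzero degrees. Then for any k-linear section σ: R/I → R of the quotient map, there is a degree −1 k-linear operator h on K such that: π∘σ = 1 on R/I, σ∘π = 1_K − [d_K, h], h² = 0, h∘σ = 0, and π∘h = 0, where π: K → R/I is the canonical augmentation. In other words (σ, π, h) is a strong deformation retract of (K, d_K) onto (R/I, 0). -/

import Mathlib

noncomputable section
namespace Stmt10

/-- Quasi-regularity of a sequence (elementary formulation, cf. Stacks 10.69). -/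
def IsQuasiRegular {R : Type*} [CommRing R] {n : ℕ} (t : Fin n → R) : Prop :=
  ∀ (m : ℕ) (s : Finset (Fin n → ℕ)) (a : (Fin n → ℕ) → R),
    (∀ M ∈ s, ∑ i, M i = m) →
    (∑ M ∈ s, a M * ∏ i, t i ^ M i) ∈ (Ideal.span (Set.range t)) ^ (m + 1) →
    ∀ M ∈ s, a M ∈ Ideal.span (Set.range t)

def ksign {n : ℕ} (i : Fin n) (S : Finset (Fin n)) : ℤ :=
  (-1) ^ (S.filter (fun j => j < i)).card

variable (k : Type*) {R : Type*} [CommRing k] [CommRing R] [Algebra k R]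
  {n : ℕ} (t : Fin n → R)

/- The Koszul complex `K = ⋀(⊕_i R θ_i)` of `t_1, …, t_n` over `R` is modelled as the free
`R`-module on subsets `S ⊆ {1,…,n}` (`θ_S = θ_{i_1} ∧ ⋯ ∧ θ_{i_p}`), graded by `|S|`, with
differential `d_K = ∑_i t_i θ_i^*`. -/

/-- The Koszul differential `d_K = ∑_i t_i θ_i^*`, as a `k`-linear operator. -/
def dK : (Finset (Fin n) → R) →ₗ[k] (Finset (Fin n) → R) where
  toFun f S := ∑ i : Fin n, if i ∈ S then 0 else ksign i S • (t i * f (insert i S))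
  map_add' f g := by
    funext S
    simp only [Pi.add_apply]
    rw [← Finset.sum_add_distrib]
    refine Finset.sum_congr rfl fun i _ => ?_
    split <;> simp [mul_add, smul_add]
  map_smul' a f := by
    funext S
    simp only [Pi.smul_apply, RingHom.id_apply]
    rw [Finset.smul_sum]
    refine Finset.sum_congr rfl fun i _ => ?_
    split <;> simp [mul_smul_comm, smul_comm]

/-- The augmentation `π : K → R/I`, projecting to the degree-0 part and reducing mod `I`. -/
def aug : (Finset (Fin n) → R) →ₗ[k] R ⧸ Ideal.span (Set.range t) :=
  (Ideal.Quotient.mkₐ k (Ideal.span (Set.range t))).toLinearMap ∘ₗ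
    (LinearMap.proj (R := k) (φ := fun _ : Finset (Fin n) => R) ∅)

/-- The inclusion `σ : R/I → K` induced by a `k`-linear section of `R → R/I`, landing in
degree 0. -/
def incl (σ : (R ⧸ Ideal.span (Set.range t)) →ₗ[k] R) :
    (R ⧸ Ideal.span (Set.range t)) →ₗ[k] (Finset (Fin n) → R) :=
  (LinearMap.single k (fun _ : Finset (Fin n) => R) ∅) ∘ₗ σ

/- Write `e = 1 - σπ` (`kerProj`) for the projection of `K` onto `ker π` along `σ(R/I)`. The augmented complex
`K_n → ⋯ → K_0 → R/I → 0` is exact and consists of projective `k`-modules, so a homotopy `H` of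
degree `+1` with `d H + H d = e` is built degree by degree: on `K_m` the map `e - H d` takes values in
the boundaries (for `m > 0` it is a cycle, for `m = 0` it lands in `I θ_∅ = d K_1`), hence lifts
through `d : K_{m+1} → K_m`. The side conditions are then forced purely algebraically in the ring
`End_k K`: `h₁ = e H e` is again a homotopy, and so is `h = h₁ d h₁`, which moreover satisfies
`h d h = h`, whence `h² = 0`. -/

section ContractingHomotopy

variable {A : Type*} [Ring A] {d e H h : A}

theorem homotopy_sandwich (hee : e * e = e) (hed : e * d = d) (hde : d * e = d)
    (hH : d * H + H * d = e) : d * (e * H * e) + e * H * e * d = e :=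
  calc d * (e * H * e) + e * H * e * d = d * e * H * e + e * H * (e * d) := by noncomm_ring
    _ = d * H * e + e * H * d := by rw [hde, hed]
    _ = (d * H + H * d) * e + e * (d * H + H * d) - H * (d * e) - e * d * H := by noncomm_ring
    _ = e + e - H * d - d * H := by rw [hH, hee, hde, hed]
    _ = e + e - (d * H + H * d) := by abel
    _ = e := by rw [hH]; abel

theorem mul_homotopy_mul_eq_self (hdd : d * d = 0) (hed : e * d = d) (hh : d * h + h * d = e) :
    d * h * d = d :=
  calc d * h * d = (d * h + h * d) * d - h * (d * d) := by noncomm_ring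
    _ = d := by rw [hh, hdd, mul_zero, sub_zero, hed]

theorem homotopy_cube (hdd : d * d = 0) (hed : e * d = d) (hh : d * h + h * d = e) :
    d * (h * d * h) + h * d * h * d = e :=
  calc d * (h * d * h) + h * d * h * d = d * h * d * h + h * (d * h * d) := by noncomm_ring
    _ = e := by rw [mul_homotopy_mul_eq_self hdd hed hh, hh]

theorem homotopy_cube_mul_mul_cube (hdd : d * d = 0) (hed : e * d = d) (hh : d * h + h * d = e) :
    h * d * h * d * (h * d * h) = h * d * h :=
  calc h * d * h * d * (h * d * h) = h * (d * h * d) * (h * d * h) := by noncomm_ring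
    _ = h * d * (h * d * h) := by rw [mul_homotopy_mul_eq_self hdd hed hh]
    _ = h * (d * h * d) * h := by noncomm_ring
    _ = h * d * h := by rw [mul_homotopy_mul_eq_self hdd hed hh]

theorem sq_eq_zero_of_homotopy (hh : d * h + h * d = e) (heh : e * h = h) (hhdh : h * d * h = h) :
    h * h = 0 := by
  have : h * h = h * h + h * h :=
    calc h * h = h * (e * h) := by rw [heh]
      _ = h * d * h * h + h * (h * d * h) := by rw [← hh]; noncomm_ring
      _ = h * h + h * h := by rw [hhdh]
  exact left_eq_add.mp this

end ContractingHomotopy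

section Projective

variable {A : Type*} [Semiring A]

theorem Module.Projective.exists_comp_eq_of_range_le {M N P : Type*} [AddCommMonoid M] [Module A M]
    [AddCommMonoid N] [Module A N] [AddCommMonoid P] [Module A P] [Module.Projective A P]
    (D : N →ₗ[A] M) (w : P →ₗ[A] M) (hw : LinearMap.range w ≤ LinearMap.range D) :
    ∃ ℓ : P →ₗ[A] N, D ∘ₗ ℓ = w := by
  obtain ⟨ℓ, hℓ⟩ := Module.projective_lifting_property D.rangeRestrict
    (w.codRestrict (LinearMap.range D) fun x => hw ⟨x, rfl⟩) D.surjective_rangeRestrict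
  exact ⟨ℓ, LinearMap.ext fun x => congrArg Subtype.val (LinearMap.congr_fun hℓ x)⟩

theorem Module.Projective.pi_fintype {ι : Type*} [Fintype ι] [DecidableEq ι]
    (M : Type*) [AddCommMonoid M] [Module A M] [Module.Projective A M] :
    Module.Projective A (ι → M) :=
  .of_equiv (DirectSum.linearEquivFunOnFintype A ι fun _ => M)

end Projective

def IsHomogeneous (p : ℕ) (f : Finset (Fin n) → R) : Prop :=
  ∀ S : Finset (Fin n), S.card ≠ p → f S = 0

theorem isHomogeneous_zero (p : ℕ) : IsHomogeneous p (0 : Finset (Fin n) → R) :=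
  fun _ _ => rfl

theorem IsHomogeneous.add {p : ℕ} {f g : Finset (Fin n) → R} (hf : IsHomogeneous p f)
    (hg : IsHomogeneous p g) : IsHomogeneous p (f + g) :=
  fun S hS => by rw [Pi.add_apply, hf S hS, hg S hS, add_zero]

theorem IsHomogeneous.sub {p : ℕ} {f g : Finset (Fin n) → R} (hf : IsHomogeneous p f)
    (hg : IsHomogeneous p g) : IsHomogeneous p (f - g) :=
  fun S hS => by rw [Pi.sub_apply, hf S hS, hg S hS, sub_zero]

theorem IsHomogeneous.eq_single_empty {f : Finset (Fin n) → R} (hf : IsHomogeneous 0 f) :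
    f = Pi.single ∅ (f ∅) := by
  funext S
  rcases eq_or_ne S ∅ with rfl | hS
  · rw [Pi.single_eq_same]
  · rw [Pi.single_eq_of_ne hS, hf S (Finset.card_ne_zero.2 (Finset.nonempty_iff_ne_empty.2 hS))]

def RaisesDegree (φ : (Finset (Fin n) → R) →ₗ[k] (Finset (Fin n) → R)) : Prop :=
  ∀ (p : ℕ) (f : Finset (Fin n) → R), IsHomogeneous p f → IsHomogeneous (p + 1) (φ f)

def degreePart (p : ℕ) : (Finset (Fin n) → R) →ₗ[k] (Finset (Fin n) → R) where
  toFun f S := if S.card = p then f S else 0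
  map_add' f g := by funext S; by_cases h : S.card = p <;> simp [h]
  map_smul' a f := by funext S; by_cases h : S.card = p <;> simp [h]

@[simp] theorem degreePart_apply (p : ℕ) (f : Finset (Fin n) → R) (S : Finset (Fin n)) :
    degreePart k p f S = if S.card = p then f S else 0 := rfl

theorem isHomogeneous_degreePart (p : ℕ) (f : Finset (Fin n) → R) :
    IsHomogeneous p (degreePart k p f) :=
  fun _ hS => if_neg hS

theorem IsHomogeneous.degreePart_self {p : ℕ} {f : Finset (Fin n) → R} (hf : IsHomogeneous p f) :
    degreePart k p f = f := by
  funext S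
  by_cases h : S.card = p
  · rw [degreePart_apply, if_pos h]
  · rw [degreePart_apply, if_neg h, hf S h]

theorem IsHomogeneous.degreePart_of_ne {p q : ℕ} {f : Finset (Fin n) → R}
    (hf : IsHomogeneous q f) (hpq : p ≠ q) : degreePart k p f = 0 := by
  funext S
  by_cases h : S.card = p
  · rw [degreePart_apply, if_pos h, hf S (h ▸ hpq), Pi.zero_apply]
  · rw [degreePart_apply, if_neg h, Pi.zero_apply]

theorem sum_degreePart (f : Finset (Fin n) → R) :
    ∑ p ∈ Finset.range (n + 1), degreePart k p f = f := by
  funext S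
  have hS : S.card ∈ Finset.range (n + 1) :=
    Finset.mem_range_succ_iff.2 (by simpa using Finset.card_le_univ S)
  simp only [Finset.sum_apply, degreePart_apply, Finset.sum_ite_eq, if_pos hS]

theorem dK_apply (f : Finset (Fin n) → R) (S : Finset (Fin n)) :
    dK k t f S = ∑ i : Fin n, if i ∈ S then 0 else ksign i S • (t i * f (insert i S)) := rfl

theorem dK_apply_eq_zero {f : Finset (Fin n) → R} {S : Finset (Fin n)}
    (hf : ∀ i ∉ S, f (insert i S) = 0) : dK k t f S = 0 := by
  rw [dK_apply]
  refine Finset.sum_eq_zero fun i _ => ?_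
  by_cases hi : i ∈ S
  · rw [if_pos hi]
  · rw [if_neg hi, hf i hi, mul_zero, smul_zero]

theorem isHomogeneous_dK {p : ℕ} {f : Finset (Fin n) → R} (hf : IsHomogeneous (p + 1) f) :
    IsHomogeneous p (dK k t f) :=
  fun S hS => dK_apply_eq_zero k t fun i hi =>
    hf _ (by rw [Finset.card_insert_of_notMem hi]; omega)

theorem IsHomogeneous.dK_eq_zero {f : Finset (Fin n) → R} (hf : IsHomogeneous 0 f) :
    dK k t f = 0 :=
  funext fun S => dK_apply_eq_zero k t fun i hi =>
    hf _ (by rw [Finset.card_insert_of_notMem hi]; omega)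

theorem degreePart_dK (p : ℕ) (f : Finset (Fin n) → R) :
    degreePart k p (dK k t f) = dK k t (degreePart k (p + 1) f) := by
  funext S
  rw [degreePart_apply, dK_apply, dK_apply]
  by_cases h : S.card = p
  · rw [if_pos h]
    refine Finset.sum_congr rfl fun i _ => ?_
    by_cases hi : i ∈ S
    · simp only [if_pos hi]
    · simp only [if_neg hi, degreePart_apply, Finset.card_insert_of_notMem hi, h, if_true]
  · rw [if_neg h]
    refine (Finset.sum_eq_zero fun i _ => ?_).symm
    by_cases hi : i ∈ S
    · rw [if_pos hi]
    · rw [if_neg hi, degreePart_apply, Finset.card_insert_of_notMem hi,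
        if_neg (by omega), mul_zero, smul_zero]

theorem ksign_insert_of_lt {i j : Fin n} (hij : i < j) {S : Finset (Fin n)} (hi : i ∉ S) :
    ksign j (insert i S) = -ksign j S := by
  rw [ksign, ksign, Finset.filter_insert, if_pos hij,
    Finset.card_insert_of_notMem (by simp [hi]), pow_succ, mul_neg_one]

theorem ksign_insert_of_not_lt {i j : Fin n} (hij : ¬ i < j) (S : Finset (Fin n)) :
    ksign j (insert i S) = ksign j S := by
  rw [ksign, ksign, Finset.filter_insert, if_neg hij]

theorem ksign_mul_ksign_insert_add {i j : Fin n} (hij : i ≠ j) {S : Finset (Fin n)}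
    (hi : i ∉ S) (hj : j ∉ S) :
    ksign i S * ksign j (insert i S) + ksign j S * ksign i (insert j S) = 0 := by
  rcases lt_or_gt_of_ne hij with h | h
  · rw [ksign_insert_of_lt h hi, ksign_insert_of_not_lt (not_lt.mpr h.le)]
    ring
  · rw [ksign_insert_of_lt h hj, ksign_insert_of_not_lt (not_lt.mpr h.le)]
    ring

theorem dK_dK (f : Finset (Fin n) → R) : dK k t (dK k t f) = 0 := by
  funext S
  -- the term of index `(i, j)` cancels the term of index `(j, i)`
  let term : Fin n × Fin n → R := fun ij =>
    if ij.1 ∈ S ∨ ij.2 ∈ insert ij.1 S then 0 else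
      (ksign ij.1 S * ksign ij.2 (insert ij.1 S)) •
        (t ij.1 * (t ij.2 * f (insert ij.2 (insert ij.1 S))))
  have hexpand : dK k t (dK k t f) S = ∑ ij, term ij := by
    rw [dK_apply, ← Finset.univ_product_univ, Finset.sum_product]
    refine Finset.sum_congr rfl fun i _ => ?_
    by_cases hi : i ∈ S
    · simp [term, hi]
    · rw [if_neg hi, dK_apply, Finset.mul_sum, Finset.smul_sum]
      refine Finset.sum_congr rfl fun j _ => ?_
      by_cases hj : j ∈ insert i S
      · simp only [term, hj, if_true, or_true, mul_zero, smul_zero]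
      · simp only [term, hi, hj, false_or, if_false, mul_smul_comm, smul_smul]
  rw [hexpand, Pi.zero_apply]
  refine Finset.sum_ninvolution Prod.swap (fun ⟨i, j⟩ => ?_) (fun ⟨i, j⟩ hne heq => ?_)
    (fun _ => Finset.mem_univ _) Prod.swap_swap
  · by_cases hij : i = j
    · subst hij; simp [term]
    by_cases hi : i ∈ S
    · simp [term, hi]
    by_cases hj : j ∈ S
    · simp [term, hj]
    have hji : j ∉ insert i S := by simp [Ne.symm hij, hj]
    have hij' : i ∉ insert j S := by simp [hij, hi]
    simp only [term, Prod.swap, hi, hj, hji, hij', or_self, if_false, Finset.insert_comm j i,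
      mul_left_comm (t j) (t i), ← add_smul, ksign_mul_ksign_insert_add hij hi hj, zero_smul]
  · obtain rfl : j = i := congrArg Prod.fst heq
    exact hne (by simp [term])

theorem dK_single_singleton (i : Fin n) (c : R) :
    dK k t (Pi.single {i} c) = Pi.single ∅ (t i * c) := by
  funext S
  rw [dK_apply]
  rcases eq_or_ne S ∅ with rfl | hS
  · rw [Pi.single_eq_same, Finset.sum_eq_single i]
    · simp [ksign]
    · intro j _ hji
      rw [if_neg (Finset.notMem_empty j), Finset.insert_empty,
        Pi.single_eq_of_ne (by simpa using hji), mul_zero, smul_zero]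
    · exact fun h => absurd (Finset.mem_univ i) h
  · rw [Pi.single_eq_of_ne hS]
    refine Finset.sum_eq_zero fun j _ => ?_
    by_cases hj : j ∈ S
    · rw [if_pos hj]
    · have hne : insert j S ≠ {i} := fun h => by
        have := congrArg Finset.card h
        rw [Finset.card_insert_of_notMem hj, Finset.card_singleton] at this
        exact hS (Finset.card_eq_zero.1 (by omega))
      rw [if_neg hj, Pi.single_eq_of_ne hne, mul_zero, smul_zero]

theorem isHomogeneous_single (S : Finset (Fin n)) (r : R) :
    IsHomogeneous S.card (Pi.single S r) :=
  fun _ hS' => Pi.single_eq_of_ne (M := fun _ => R) (ne_of_apply_ne Finset.card hS') r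

theorem single_empty_mem_range_dK {r : R} (hr : r ∈ Ideal.span (Set.range t)) :
    Pi.single ∅ r ∈ LinearMap.range (dK k t ∘ₗ degreePart k 1) := by
  obtain ⟨c, rfl⟩ := Ideal.mem_span_range_iff_exists_fun.1 hr
  refine ⟨∑ i, Pi.single {i} (c i), ?_⟩
  have hsingle (i : Fin n) : degreePart k 1 (Pi.single {i} (c i)) = Pi.single {i} (c i) :=
    (isHomogeneous_single {i} (c i)).degreePart_self k
  simp only [LinearMap.comp_apply, map_sum, hsingle, dK_single_singleton, mul_comm (t _)]
  exact (map_sum (AddMonoidHom.single (fun _ : Finset (Fin n) => R) ∅) _ _).symm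

theorem aug_apply (f : Finset (Fin n) → R) :
    aug k t f = Ideal.Quotient.mk (Ideal.span (Set.range t)) (f ∅) := rfl

theorem incl_apply (σ : (R ⧸ Ideal.span (Set.range t)) →ₗ[k] R)
    (x : R ⧸ Ideal.span (Set.range t)) : incl k t σ x = Pi.single ∅ (σ x) := rfl

theorem aug_dK (f : Finset (Fin n) → R) : aug k t (dK k t f) = 0 := by
  rw [aug_apply, Ideal.Quotient.eq_zero_iff_mem, dK_apply]
  refine Ideal.sum_mem _ fun i _ => ?_
  rw [if_neg (Finset.notMem_empty i)]
  exact Submodule.smul_of_tower_mem _ _ (Ideal.mul_mem_right _ _ (Ideal.subset_span ⟨i, rfl⟩))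

theorem dK_incl (σ : (R ⧸ Ideal.span (Set.range t)) →ₗ[k] R)
    (x : R ⧸ Ideal.span (Set.range t)) : dK k t (incl k t σ x) = 0 :=
  (isHomogeneous_single ∅ (σ x)).dK_eq_zero k t

theorem IsHomogeneous.aug_eq_zero {p : ℕ} {f : Finset (Fin n) → R}
    (hf : IsHomogeneous (p + 1) f) : aug k t f = 0 := by
  rw [aug_apply, hf ∅ (by simp), map_zero]

theorem aug_incl {σ : (R ⧸ Ideal.span (Set.range t)) →ₗ[k] R}
    (hσ : ∀ x, Ideal.Quotient.mk (Ideal.span (Set.range t)) (σ x) = x)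
    (x : R ⧸ Ideal.span (Set.range t)) : aug k t (incl k t σ x) = x := by
  rw [aug_apply, incl_apply, Pi.single_eq_same, hσ]

def kerProj (σ : (R ⧸ Ideal.span (Set.range t)) →ₗ[k] R) :
    Module.End k (Finset (Fin n) → R) :=
  LinearMap.id - incl k t σ ∘ₗ aug k t

section KerProj

variable {t} {σ : (R ⧸ Ideal.span (Set.range t)) →ₗ[k] R}

theorem kerProj_apply (f : Finset (Fin n) → R) :
    kerProj k t σ f = f - incl k t σ (aug k t f) := rfl

theorem dK_kerProj (f : Finset (Fin n) → R) : dK k t (kerProj k t σ f) = dK k t f := by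
  rw [kerProj_apply, map_sub, dK_incl, sub_zero]

theorem kerProj_dK (f : Finset (Fin n) → R) : kerProj k t σ (dK k t f) = dK k t f := by
  rw [kerProj_apply, aug_dK, map_zero, sub_zero]

theorem aug_kerProj (hσ : ∀ x, Ideal.Quotient.mk (Ideal.span (Set.range t)) (σ x) = x)
    (f : Finset (Fin n) → R) : aug k t (kerProj k t σ f) = 0 := by
  rw [kerProj_apply, map_sub, aug_incl k t hσ, sub_self]

theorem kerProj_incl (hσ : ∀ x, Ideal.Quotient.mk (Ideal.span (Set.range t)) (σ x) = x)
    (x : R ⧸ Ideal.span (Set.range t)) : kerProj k t σ (incl k t σ x) = 0 := by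
  rw [kerProj_apply, aug_incl k t hσ, sub_self]

theorem kerProj_kerProj (hσ : ∀ x, Ideal.Quotient.mk (Ideal.span (Set.range t)) (σ x) = x)
    (f : Finset (Fin n) → R) : kerProj k t σ (kerProj k t σ f) = kerProj k t σ f := by
  rw [kerProj_apply k (kerProj k t σ f), aug_kerProj k hσ, map_zero, sub_zero]

theorem isHomogeneous_kerProj {p : ℕ} {f : Finset (Fin n) → R} (hf : IsHomogeneous p f) :
    IsHomogeneous p (kerProj k t σ f) := by
  rw [kerProj_apply]
  cases p with
  | zero => exact hf.sub (isHomogeneous_single ∅ _)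
  | succ p => rw [hf.aug_eq_zero k t, map_zero, sub_zero]; exact hf

end KerProj

structure IsPartialHomotopy (σ : (R ⧸ Ideal.span (Set.range t)) →ₗ[k] R) (m : ℕ)
    (H : Module.End k (Finset (Fin n) → R)) : Prop where
  raisesDegree : RaisesDegree k H
  eq_zero : ∀ q, m ≤ q → ∀ f, IsHomogeneous q f → H f = 0
  dK_add_dK : ∀ q < m, ∀ f, IsHomogeneous q f → dK k t (H f) + H (dK k t f) = kerProj k t σ f

section PartialHomotopy

variable {t} {σ : (R ⧸ Ideal.span (Set.range t)) →ₗ[k] R}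

theorem isPartialHomotopy_zero : IsPartialHomotopy k t σ 0 0 where
  raisesDegree _ _ _ := isHomogeneous_zero _
  eq_zero _ _ _ _ := rfl
  dK_add_dK _ h := absurd h (Nat.not_lt_zero _)

theorem exists_homogeneous_lift [Module.Projective k R] (m : ℕ)
    (w : Module.End k (Finset (Fin n) → R))
    (hw : ∀ f, IsHomogeneous m f → w f ∈ LinearMap.range (dK k t ∘ₗ degreePart k (m + 1))) :
    ∃ X : Module.End k (Finset (Fin n) → R),
      (∀ f, IsHomogeneous m f → dK k t (X f) = w f) ∧
      (∀ f, IsHomogeneous (m + 1) (X f)) ∧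
      (∀ f, degreePart k m f = 0 → X f = 0) := by
  have := Module.Projective.pi_fintype (A := k) (ι := Finset (Fin n)) R
  obtain ⟨ℓ, hℓ⟩ := Module.Projective.exists_comp_eq_of_range_le
    (dK k t ∘ₗ degreePart k (m + 1)) (w ∘ₗ degreePart k m)
    (by rintro _ ⟨f, rfl⟩; exact hw _ (isHomogeneous_degreePart k m f))
  refine ⟨degreePart k (m + 1) ∘ₗ ℓ ∘ₗ degreePart k m, fun f hf => ?_,
    fun f => isHomogeneous_degreePart k _ _, fun f hf => ?_⟩
  · have := LinearMap.congr_fun hℓ f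
    simp only [LinearMap.comp_apply, hf.degreePart_self k] at this ⊢
    exact this
  · simp only [LinearMap.comp_apply, hf, map_zero]

theorem IsPartialHomotopy.exists_succ [Module.Projective k R] {m : ℕ}
    {H : Module.End k (Finset (Fin n) → R)} (hH : IsPartialHomotopy k t σ m H)
    (hW : ∀ f, IsHomogeneous m f →
      kerProj k t σ f - H (dK k t f) ∈ LinearMap.range (dK k t ∘ₗ degreePart k (m + 1))) :
    ∃ H', IsPartialHomotopy k t σ (m + 1) H' := by
  obtain ⟨X, hXd, hXdeg, hXzero⟩ :=
    exists_homogeneous_lift k m (kerProj k t σ - H ∘ₗ dK k t) hW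
  have hX_ne {q : ℕ} {f : Finset (Fin n) → R} (hf : IsHomogeneous q f) (hq : m ≠ q) : X f = 0 :=
    hXzero f (hf.degreePart_of_ne k hq)
  have hX_dK {q : ℕ} {f : Finset (Fin n) → R} (hf : IsHomogeneous q f) (hq : q ≤ m) :
      X (dK k t f) = 0 :=
    hXzero _ (by rw [degreePart_dK, hf.degreePart_of_ne k (by omega), map_zero])
  refine ⟨H + X, ⟨fun p f hf => ?_, fun q hq f hf => ?_, fun q hq f hf => ?_⟩⟩
  · rw [LinearMap.add_apply]
    refine (hH.raisesDegree p f hf).add ?_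
    rcases eq_or_ne m p with rfl | hp
    · exact hXdeg f
    · rw [hX_ne hf hp]; exact isHomogeneous_zero _
  · rw [LinearMap.add_apply, hH.eq_zero q (by omega) f hf, hX_ne hf (by omega), add_zero]
  · rw [LinearMap.add_apply, LinearMap.add_apply, hX_dK hf (by omega), add_zero, map_add]
    rcases Nat.lt_succ_iff_lt_or_eq.1 hq with hq | rfl
    · rw [hX_ne hf hq.ne', map_zero, add_zero, hH.dK_add_dK q hq f hf]
    · rw [hH.eq_zero q le_rfl f hf, map_zero, zero_add, hXd f hf, LinearMap.sub_apply,
        LinearMap.comp_apply, sub_add_cancel]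

theorem kerProj_sub_mem_range_dK_of_isHomogeneous_zero
    (hσ : ∀ x, Ideal.Quotient.mk (Ideal.span (Set.range t)) (σ x) = x)
    (H : Module.End k (Finset (Fin n) → R)) {f : Finset (Fin n) → R} (hf : IsHomogeneous 0 f) :
    kerProj k t σ f - H (dK k t f) ∈ LinearMap.range (dK k t ∘ₗ degreePart k 1) := by
  have he : IsHomogeneous 0 (kerProj k t σ f) := isHomogeneous_kerProj k hf
  have hI : kerProj k t σ f ∅ ∈ Ideal.span (Set.range t) :=
    Ideal.Quotient.eq_zero_iff_mem.1 (aug_kerProj k hσ f)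
  rw [hf.dK_eq_zero k t, map_zero, sub_zero, he.eq_single_empty]
  exact single_empty_mem_range_dK k t hI

theorem IsPartialHomotopy.kerProj_sub_mem_range_dK
    (hexact : ∀ (p : ℕ) (f : Finset (Fin n) → R), dK k t f = 0 →
      IsHomogeneous (p + 1) f → ∃ g, dK k t g = f)
    {p : ℕ} {H : Module.End k (Finset (Fin n) → R)} (hH : IsPartialHomotopy k t σ (p + 1) H)
    {f : Finset (Fin n) → R} (hf : IsHomogeneous (p + 1) f) :
    kerProj k t σ f - H (dK k t f) ∈ LinearMap.range (dK k t ∘ₗ degreePart k (p + 2)) := by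
  have hdf : IsHomogeneous p (dK k t f) := isHomogeneous_dK k t hf
  have hw : IsHomogeneous (p + 1) (kerProj k t σ f - H (dK k t f)) :=
    (isHomogeneous_kerProj k hf).sub (hH.raisesDegree p _ hdf)
  have hcycle : dK k t (kerProj k t σ f - H (dK k t f)) = 0 := by
    have := hH.dK_add_dK p p.lt_succ_self _ hdf
    rw [dK_dK, map_zero, add_zero, kerProj_dK] at this
    rw [map_sub, dK_kerProj, this, sub_self]
  obtain ⟨g, hg⟩ := hexact p _ hcycle hw
  exact ⟨g, by rw [LinearMap.comp_apply, ← degreePart_dK, hg, hw.degreePart_self k]⟩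

theorem exists_isPartialHomotopy [Module.Projective k R]
    (hexact : ∀ (p : ℕ) (f : Finset (Fin n) → R), dK k t f = 0 →
      IsHomogeneous (p + 1) f → ∃ g, dK k t g = f)
    (hσ : ∀ x, Ideal.Quotient.mk (Ideal.span (Set.range t)) (σ x) = x) (m : ℕ) :
    ∃ H, IsPartialHomotopy k t σ m H := by
  induction m with
  | zero => exact ⟨0, isPartialHomotopy_zero k⟩
  | succ m ih =>
    obtain ⟨H, hH⟩ := ih
    refine hH.exists_succ k fun f hf => ?_
    cases m with
    | zero => exact kerProj_sub_mem_range_dK_of_isHomogeneous_zero k hσ H hf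
    | succ p => exact hH.kerProj_sub_mem_range_dK k hexact hf

theorem IsPartialHomotopy.dK_mul_add_mul_dK {H : Module.End k (Finset (Fin n) → R)}
    (hH : IsPartialHomotopy k t σ (n + 1) H) : dK k t * H + H * dK k t = kerProj k t σ := by
  refine LinearMap.ext fun f => ?_
  rw [← sum_degreePart k f]
  simp only [map_sum, LinearMap.add_apply, Module.End.mul_apply]
  exact Finset.sum_congr rfl fun q hq =>
    hH.dK_add_dK q (Finset.mem_range.1 hq) _ (isHomogeneous_degreePart k q f)

end PartialHomotopy

section Normalization

variable {t} {σ : (R ⧸ Ideal.span (Set.range t)) →ₗ[k] R}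

theorem dK_mul_dK : dK k t * dK k t = 0 :=
  LinearMap.ext (dK_dK k t)

theorem kerProj_mul_dK : kerProj k t σ * dK k t = dK k t :=
  LinearMap.ext (kerProj_dK k)

theorem dK_mul_kerProj : dK k t * kerProj k t σ = dK k t :=
  LinearMap.ext (dK_kerProj k)

theorem kerProj_mul_self (hσ : ∀ x, Ideal.Quotient.mk (Ideal.span (Set.range t)) (σ x) = x) :
    kerProj k t σ * kerProj k t σ = kerProj k t σ :=
  LinearMap.ext (kerProj_kerProj k hσ)

theorem kerProj_comp_incl (hσ : ∀ x, Ideal.Quotient.mk (Ideal.span (Set.range t)) (σ x) = x) :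
    kerProj k t σ ∘ₗ incl k t σ = 0 :=
  LinearMap.ext (kerProj_incl k hσ)

theorem aug_comp_kerProj (hσ : ∀ x, Ideal.Quotient.mk (Ideal.span (Set.range t)) (σ x) = x) :
    aug k t ∘ₗ kerProj k t σ = 0 :=
  LinearMap.ext (aug_kerProj k hσ)

theorem RaisesDegree.kerProj_mul_mul_kerProj {H : Module.End k (Finset (Fin n) → R)}
    (hH : RaisesDegree k H) : RaisesDegree k (kerProj k t σ * H * kerProj k t σ) :=
  fun p _ hf => isHomogeneous_kerProj k (hH p _ (isHomogeneous_kerProj k hf))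

theorem RaisesDegree.mul_dK_mul {h : Module.End k (Finset (Fin n) → R)}
    (hh : RaisesDegree k h) : RaisesDegree k (h * dK k t * h) :=
  fun p _ hf => hh p _ (isHomogeneous_dK k t (hh p _ hf))

end Normalization

theorem koszul_strong_deformation_retract
    (hRproj : Module.Projective k R)
    (hexact : ∀ (p : ℕ) (f : Finset (Fin n) → R), dK k t f = 0 →
        (∀ S, S.card ≠ p + 1 → f S = 0) → ∃ g, dK k t g = f)
    (σ : (R ⧸ Ideal.span (Set.range t)) →ₗ[k] R)
    (hσ : ∀ x, Ideal.Quotient.mk (Ideal.span (Set.range t)) (σ x) = x) :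
    ∃ h : (Finset (Fin n) → R) →ₗ[k] (Finset (Fin n) → R),
      -- `h` has degree `−1` (it raises the exterior degree by one)
      (∀ (p : ℕ) (f : Finset (Fin n) → R), (∀ S, S.card ≠ p → f S = 0) →
          ∀ S, S.card ≠ p + 1 → h f S = 0)
      ∧ aug k t ∘ₗ incl k t σ = LinearMap.id
      ∧ incl k t σ ∘ₗ aug k t = LinearMap.id - (dK k t ∘ₗ h + h ∘ₗ dK k t)
      ∧ h ∘ₗ h = 0
      ∧ h ∘ₗ incl k t σ = 0
      ∧ aug k t ∘ₗ h = 0 := by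
  obtain ⟨H, hH⟩ := exists_isPartialHomotopy k hexact hσ (n + 1)
  set d := dK k t
  set e := kerProj k t σ
  have hee : e * e = e := kerProj_mul_self k hσ
  have hed : e * d = d := kerProj_mul_dK k
  have hde : d * e = d := dK_mul_kerProj k
  have hdd : d * d = 0 := dK_mul_dK k
  set h₁ := e * H * e
  have hh₁ : d * h₁ + h₁ * d = e := homotopy_sandwich hee hed hde hH.dK_mul_add_mul_dK
  set h := h₁ * d * h₁
  have hh : d * h + h * d = e := homotopy_cube hdd hed hh₁
  have hhdh : h * d * h = h := homotopy_cube_mul_mul_cube hdd hed hh₁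
  have heh : e * h = h := by simp only [h, h₁, ← mul_assoc, hee]
  have hhe : h * e = h := by simp only [h, h₁, mul_assoc, hee]
  refine ⟨h, (hH.raisesDegree.kerProj_mul_mul_kerProj k).mul_dK_mul k,
    LinearMap.ext (aug_incl k t hσ), ?_, sq_eq_zero_of_homotopy hh heh hhdh, ?_, ?_⟩
  · rw [← Module.End.mul_eq_comp, ← Module.End.mul_eq_comp, hh]
    exact (sub_sub_cancel _ _).symm
  · rw [← hhe, Module.End.mul_eq_comp, LinearMap.comp_assoc,
      kerProj_comp_incl k hσ, LinearMap.comp_zero]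
  · rw [← heh, Module.End.mul_eq_comp, ← LinearMap.comp_assoc,
      aug_comp_kerProj k hσ, LinearMap.zero_comp]

end Stmt10
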